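/- arXiv:2406.14700 — 4 statements merged into one kernel-verified Lean document; each statement's English description precedes it below -/
import Mathlib

section
/- Let φ = (√5 − 1)/2, define C_n := (5/6)·Π_{j=3}^{n}(1 − (j+1)·φ^j) for n ≥ 2 (the product being empty for n = 2), and let C := lim_{n→∞} C_n. Then C > 0, and for all real p, q with 1/2 ≤ q < p < φ and every integer n ≥ 2 such that s_{n-1}(p) ≤ 0, one has s_n(p) > s_n(q) + C_n·(p − q) > s_n(q) + C·(p − q). -/
/-- `v p n` is the optimal expected number of heads in the coin game with `n` coins,
each landing heads with probability `p`. -/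
noncomputable def v (p : ℝ) : ℕ → ℝ
  | 0 => 0
  | n + 1 =>
      ((n : ℝ) + 1) * p ^ (n + 1) + v p n * (1 - p) ^ (n + 1) +
        ∑ j ∈ (Finset.Icc 1 n).attach,
          (((n + 1).choose j.1 : ℕ) : ℝ) * p ^ (j.1 : ℕ) * (1 - p) ^ (n + 1 - j.1) *
            ((Finset.Icc 1 j.1).attach.sup'
              (Finset.attach_nonempty_iff.mpr
                (Finset.nonempty_Icc.mpr (Finset.mem_Icc.mp j.2).1))
              (fun i => v p (n + 1 - i.1) + (i.1 : ℝ)))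
decreasing_by
  · omega
  · have h := (Finset.mem_Icc.mp i.2).1
    omega

/-- `s p n = v p n - n + 1 - p`. -/
noncomputable def s (p : ℝ) (n : ℕ) : ℝ := v p n - n + 1 - p

/-- The sequence `C_n = (5/6) * ∏_{j=3}^{n} (1 - (j+1)·φ^j)` with `φ = (√5 - 1)/2`. -/
noncomputable def Cseq (n : ℕ) : ℝ :=
  5 / 6 * ∏ j ∈ Finset.Icc 3 n, (1 - ((j : ℝ) + 1) * ((Real.sqrt 5 - 1) / 2) ^ j)

/-- `M p n j` : the sup appearing in the recursion for `v p (n+1)`. -/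
noncomputable def M (p : ℝ) (n j : ℕ) : ℝ :=
  if h : 1 ≤ j then
    (Finset.Icc 1 j).attach.sup'
      (Finset.attach_nonempty_iff.mpr (Finset.nonempty_Icc.mpr h))
      (fun i => v p (n + 1 - i.1) + (i.1 : ℝ))
  else 0

lemma v_succ (p : ℝ) (n : ℕ) : v p (n+1) =
    ((n : ℝ) + 1) * p ^ (n + 1) + v p n * (1 - p) ^ (n + 1) +
      ∑ j ∈ Finset.Icc 1 n,
        (((n + 1).choose j : ℕ) : ℝ) * p ^ j * (1 - p) ^ (n + 1 - j) * M p n j := by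
  rw [v]
  congr 1
  rw [← Finset.sum_attach (Finset.Icc 1 n)
    (fun j => (((n + 1).choose j : ℕ) : ℝ) * p ^ j * (1 - p) ^ (n + 1 - j) * M p n j)]
  refine Finset.sum_congr rfl (fun j _ => ?_)
  rw [M, dif_pos (Finset.mem_Icc.mp j.2).1]

lemma M_ge (p : ℝ) (n j i : ℕ) (hi : i ∈ Finset.Icc 1 j) :
    v p (n + 1 - i) + (i : ℝ) ≤ M p n j := by
  rw [M, dif_pos (le_trans (Finset.mem_Icc.mp hi).1 (Finset.mem_Icc.mp hi).2)]
  exact Finset.le_sup' (fun i : {x // x ∈ Finset.Icc 1 j} => v p (n + 1 - i.1) + (i.1 : ℝ))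
    (Finset.mem_attach _ ⟨i, hi⟩)
lemma M_le (p : ℝ) (n j : ℕ) (hj : 1 ≤ j) (B : ℝ)
    (h : ∀ i ∈ Finset.Icc 1 j, v p (n + 1 - i) + (i : ℝ) ≤ B) : M p n j ≤ B := by
  rw [M, dif_pos hj]
  exact Finset.sup'_le _ _ (fun i _ => h i.1 i.2)

lemma v_one (p : ℝ) : v p 1 = p := by
  have h := v_succ p 0
  rw [Finset.Icc_eq_empty (by omega)] at h
  simpa [v] using h

lemma s_one (p : ℝ) : s p 1 = 0 := by simp [s, v_one]

lemma v_eq (p : ℝ) (n : ℕ) : v p n = s p n + n - 1 + p := by simp [s]; ring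

lemma M_eval (p : ℝ) (n j i : ℕ) (hi : i ∈ Finset.Icc 1 j) (hjn : j ≤ n) :
    s p (n + 1 - i) + (n : ℝ) + p ≤ M p n j := by
  have h := M_ge p n j i hi
  have h1 : 1 ≤ i := (Finset.mem_Icc.mp hi).1
  have h2 : i ≤ n := le_trans (Finset.mem_Icc.mp hi).2 hjn
  rw [v_eq p (n+1-i)] at h
  have hc : ((n + 1 - i : ℕ) : ℝ) = (n : ℝ) + 1 - (i : ℝ) := by
    have : (i:ℝ) ≤ (n:ℝ) + 1 := by exact_mod_cast le_trans h2 (Nat.le_succ n)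
    push_cast [Nat.cast_sub (by omega : i ≤ n + 1)]; ring
  rw [hc] at h
  linarith

lemma M_bound (p : ℝ) (n j : ℕ) (hj : 1 ≤ j) (hjn : j ≤ n) (B : ℝ)
    (h : ∀ i, 1 ≤ i → i ≤ j → s p (n + 1 - i) ≤ B) :
    M p n j ≤ B + (n : ℝ) + p := by
  refine M_le p n j hj _ (fun i hi => ?_)
  have h1 : 1 ≤ i := (Finset.mem_Icc.mp hi).1
  have h2 : i ≤ j := (Finset.mem_Icc.mp hi).2
  rw [v_eq p (n+1-i)]
  have hc : ((n + 1 - i : ℕ) : ℝ) = (n : ℝ) + 1 - (i : ℝ) := by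
    push_cast [Nat.cast_sub (by omega : i ≤ n + 1)]; ring
  rw [hc]
  have := h i h1 h2
  linarith

lemma s_two (p : ℝ) : s p 2 = 2*p - 1 - p^3 := by
  have h := v_succ p 1
  have hM : M p 1 1 = v p 1 + 1 := by
    refine le_antisymm (M_le p 1 1 le_rfl _ (fun i hi => ?_)) ?_
    · have : i = 1 := by have := Finset.mem_Icc.mp hi; omega
      subst this; norm_num
    · have := M_ge p 1 1 1 (by simp)
      simpa using this
  rw [show Finset.Icc 1 1 = {1} from rfl, Finset.sum_singleton, hM, v_one] at h
  rw [s, h]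
  norm_num
  ring

lemma binom_sum (t : ℝ) (n : ℕ) :
    ∑ j ∈ Finset.Icc 1 (n+1), (((n + 2).choose j : ℕ) : ℝ) * t ^ j * (1 - t) ^ (n + 2 - j)
      = 1 - (1 - t) ^ (n + 2) - t ^ (n + 2) := by
  have hsplit : Finset.range (n + 3) = insert 0 (insert (n+2) (Finset.Icc 1 (n+1))) := by
    ext x; simp [Finset.mem_Icc, Finset.mem_range]; omega
  have hpow := add_pow t (1 - t) (n + 2)
  rw [show t + (1 - t) = 1 by ring, one_pow, hsplit] at hpow
  rw [Finset.sum_insert (by simp), Finset.sum_insert (by simp [Finset.mem_Icc])] at hpow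
  simp only [pow_zero, Nat.sub_zero, Nat.choose_zero_right, Nat.choose_self, Nat.sub_self]
  at hpow
  have : ∑ j ∈ Finset.Icc 1 (n+1), t ^ j * (1 - t) ^ (n + 2 - j) * ((n+2).choose j : ℝ)
      = ∑ j ∈ Finset.Icc 1 (n+1), (((n + 2).choose j : ℕ) : ℝ) * t ^ j * (1 - t) ^ (n + 2 - j) := by
    refine Finset.sum_congr rfl (fun j _ => by ring)
  rw [this] at hpow
  push_cast at hpow ⊢
  linarith

section Structural
variable (t : ℝ) (n : ℕ)

/-- weight in the recursion at level `n+2` -/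
noncomputable def w (t : ℝ) (n j : ℕ) : ℝ :=
  (((n + 2).choose j : ℕ) : ℝ) * t ^ j * (1 - t) ^ (n + 2 - j)

lemma w_nonneg (ht0 : 0 ≤ t) (ht1 : t ≤ 1) (j : ℕ) : 0 ≤ w t n j := by
  have h1 : (0:ℝ) ≤ 1 - t := by linarith
  exact mul_nonneg (mul_nonneg (Nat.cast_nonneg _) (pow_nonneg ht0 _)) (pow_nonneg h1 _)

lemma w_sum : ∑ j ∈ Finset.Icc 1 (n+1), w t n j = 1 - (1 - t) ^ (n + 2) - t ^ (n + 2) :=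
  binom_sum t n

lemma w_top : w t n (n+1) = ((n:ℝ)+2) * t^(n+1) * (1-t) := by
  rw [w, Nat.choose_succ_self_right, show n+2-(n+1) = 1 from by omega]
  push_cast
  ring

lemma v_succ' : v t (n+2) = ((n : ℝ) + 2) * t ^ (n + 2) + v t (n+1) * (1 - t) ^ (n + 2) +
    ∑ j ∈ Finset.Icc 1 (n+1), w t n j * M t (n+1) j := by
  rw [show (n+2) = (n+1)+1 from rfl, v_succ t (n+1)]
  have hsum : ∑ j ∈ Finset.Icc 1 (n+1),
      ((((n+1) + 1).choose j : ℕ) : ℝ) * t ^ j * (1 - t) ^ ((n+1) + 1 - j) * M t (n+1) j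
      = ∑ j ∈ Finset.Icc 1 (n+1), w t n j * M t (n+1) j :=
    Finset.sum_congr rfl (fun j _ => by rw [w])
  rw [hsum]
  push_cast
  ring

lemma s_level : s t (n+2) = v t (n+2) - ((n:ℝ)+1) - t := by
  rw [s]; push_cast; ring

/-- Lower bound choice: keep one coin when everything is a head, else fix one head. -/
lemma sLB (ht0 : 0 ≤ t) (ht1 : t ≤ 1) :
    t^(n+2)*(1-t) - (1-t)^(n+2)
      + (1 - ((n:ℝ)+2)*t^(n+1) + ((n:ℝ)+1)*t^(n+2)) * s t (n+1) ≤ s t (n+2) := by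
  have key : ∑ j ∈ Finset.Icc 1 (n+1),
      w t n j * (if j = n+1 then ((n:ℝ)+1) + t else s t (n+1) + ((n:ℝ)+1) + t)
      ≤ ∑ j ∈ Finset.Icc 1 (n+1), w t n j * M t (n+1) j := by
    refine Finset.sum_le_sum (fun j hj => ?_)
    refine mul_le_mul_of_nonneg_left ?_ (w_nonneg t n ht0 ht1 j)
    by_cases hcase : j = n+1
    · subst hcase
      rw [if_pos rfl]
      have := M_eval t (n+1) (n+1) (n+1) (by simp) le_rfl
      rw [show n+1+1-(n+1) = 1 from by omega, s_one] at this
      push_cast at this ⊢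
      linarith
    · rw [if_neg hcase]
      have h1j : 1 ≤ j := (Finset.mem_Icc.mp hj).1
      have := M_eval t (n+1) j 1 (Finset.mem_Icc.mpr ⟨le_rfl, h1j⟩) (Finset.mem_Icc.mp hj).2
      rw [show n+1+1-1 = n+1 from by omega] at this
      push_cast at this ⊢
      linarith
  have heval : ∑ j ∈ Finset.Icc 1 (n+1),
      w t n j * (if j = n+1 then ((n:ℝ)+1) + t else s t (n+1) + ((n:ℝ)+1) + t)
      = (1 - (1-t)^(n+2) - t^(n+2) - ((n:ℝ)+2)*t^(n+1)*(1-t)) * (s t (n+1) + ((n:ℝ)+1) + t)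
        + ((n:ℝ)+2)*t^(n+1)*(1-t) * (((n:ℝ)+1) + t) := by
    rw [Finset.sum_Icc_succ_top (by omega : 1 ≤ n+1), if_pos rfl]
    have hrest : ∀ j ∈ Finset.Icc 1 n,
        w t n j * (if j = n+1 then ((n:ℝ)+1) + t else s t (n+1) + ((n:ℝ)+1) + t)
        = w t n j * (s t (n+1) + ((n:ℝ)+1) + t) := by
      intro j hj
      rw [if_neg (by have := (Finset.mem_Icc.mp hj).2; omega)]
    rw [Finset.sum_congr rfl hrest, ← Finset.sum_mul]
    have hS' : ∑ j ∈ Finset.Icc 1 n, w t n j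
        = 1 - (1-t)^(n+2) - t^(n+2) - ((n:ℝ)+2)*t^(n+1)*(1-t) := by
      have := w_sum t n
      rw [Finset.sum_Icc_succ_top (by omega : 1 ≤ n+1), w_top] at this
      linarith
    rw [hS', w_top]
  rw [heval] at key
  have hv := v_succ' t n
  have hs2 : s t (n+2) = v t (n+2) - ((n:ℝ)+1) - t := s_level t n
  have hs1 : v t (n+1) = s t (n+1) + ((n:ℝ)+1) - 1 + t := by
    rw [v_eq t (n+1)]; push_cast; ring
  rw [hs2, hv, hs1]
  have hid : t^(n+2)*(1-t) - (1-t)^(n+2)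
      + (1 - ((n:ℝ)+2)*t^(n+1) + ((n:ℝ)+1)*t^(n+2)) * s t (n+1)
      = ((n:ℝ)+2)*t^(n+2) + (s t (n+1) + ((n:ℝ)+1) - 1 + t)*(1-t)^(n+2)
        + ((1 - (1-t)^(n+2) - t^(n+2) - ((n:ℝ)+2)*t^(n+1)*(1-t)) * (s t (n+1) + ((n:ℝ)+1) + t)
          + ((n:ℝ)+2)*t^(n+1)*(1-t) * (((n:ℝ)+1) + t)) - ((n:ℝ)+1) - t := by
    ring
  rw [hid]
  linarith [key]

/-- Lower bound: always fix exactly one head. -/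
lemma sLB' (ht0 : 0 ≤ t) (ht1 : t ≤ 1) :
    t^(n+2)*(1-t) - (1-t)^(n+2) + (1 - t^(n+2)) * s t (n+1) ≤ s t (n+2) := by
  have key : ∑ j ∈ Finset.Icc 1 (n+1), w t n j * (s t (n+1) + ((n:ℝ)+1) + t)
      ≤ ∑ j ∈ Finset.Icc 1 (n+1), w t n j * M t (n+1) j := by
    refine Finset.sum_le_sum (fun j hj => ?_)
    refine mul_le_mul_of_nonneg_left ?_ (w_nonneg t n ht0 ht1 j)
    have h1j : 1 ≤ j := (Finset.mem_Icc.mp hj).1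
    have := M_eval t (n+1) j 1 (Finset.mem_Icc.mpr ⟨le_rfl, h1j⟩) (Finset.mem_Icc.mp hj).2
    rw [show n+1+1-1 = n+1 from by omega] at this
    push_cast at this ⊢
    linarith
  rw [← Finset.sum_mul, w_sum] at key
  have hv := v_succ' t n
  have hs2 : s t (n+2) = v t (n+2) - ((n:ℝ)+1) - t := s_level t n
  have hs1 : v t (n+1) = s t (n+1) + ((n:ℝ)+1) - 1 + t := by
    rw [v_eq t (n+1)]; push_cast; ring
  rw [hs2, hv, hs1]
  have hid : t^(n+2)*(1-t) - (1-t)^(n+2) + (1 - t^(n+2)) * s t (n+1)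
      = ((n:ℝ)+2)*t^(n+2) + (s t (n+1) + ((n:ℝ)+1) - 1 + t)*(1-t)^(n+2)
        + (1 - (1-t)^(n+2) - t^(n+2)) * (s t (n+1) + ((n:ℝ)+1) + t) - ((n:ℝ)+1) - t := by
    ring
  rw [hid]
  linarith [key]

/-- Upper bound in the nonpositive regime. -/
lemma sUBneg (ht0 : 0 ≤ t) (ht1 : t ≤ 1)
    (hch : ∀ k, 2 ≤ k → k ≤ n+1 → s t k ≤ s t (n+1)) (hneg : s t (n+1) ≤ 0) :
    s t (n+2) ≤ t^(n+2)*(1-t) - (1-t)^(n+2)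
      + (1 - ((n:ℝ)+2)*t^(n+1) + ((n:ℝ)+1)*t^(n+2)) * s t (n+1) := by
  have key : ∑ j ∈ Finset.Icc 1 (n+1), w t n j * M t (n+1) j
      ≤ ∑ j ∈ Finset.Icc 1 (n+1),
        w t n j * (if j = n+1 then ((n:ℝ)+1) + t else s t (n+1) + ((n:ℝ)+1) + t) := by
    refine Finset.sum_le_sum (fun j hj => ?_)
    refine mul_le_mul_of_nonneg_left ?_ (w_nonneg t n ht0 ht1 j)
    have h1j : 1 ≤ j := (Finset.mem_Icc.mp hj).1
    have hjn : j ≤ n+1 := (Finset.mem_Icc.mp hj).2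
    by_cases hcase : j = n+1
    · subst hcase
      rw [if_pos rfl]
      have hb := M_bound t (n+1) (n+1) h1j le_rfl 0 (fun i hi1 hi2 => ?_)
      · push_cast at hb ⊢; linarith
      · rcases Nat.lt_or_ge i (n+1) with hlt | hge
        · have h2 : 2 ≤ n+1+1-i := by omega
          have h3 : n+1+1-i ≤ n+1 := by omega
          exact le_trans (hch _ h2 h3) hneg
        · have : i = n+1 := by omega
          subst this
          rw [show n+1+1-(n+1) = 1 from by omega, s_one]
    · rw [if_neg hcase]
      have hjn' : j ≤ n := by omega
      have hb := M_bound t (n+1) j h1j hjn (s t (n+1)) (fun i hi1 hi2 => ?_)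
      · push_cast at hb ⊢; linarith
      · have h2 : 2 ≤ n+1+1-i := by omega
        have h3 : n+1+1-i ≤ n+1 := by omega
        exact hch _ h2 h3
  have heval : ∑ j ∈ Finset.Icc 1 (n+1),
      w t n j * (if j = n+1 then ((n:ℝ)+1) + t else s t (n+1) + ((n:ℝ)+1) + t)
      = (1 - (1-t)^(n+2) - t^(n+2) - ((n:ℝ)+2)*t^(n+1)*(1-t)) * (s t (n+1) + ((n:ℝ)+1) + t)
        + ((n:ℝ)+2)*t^(n+1)*(1-t) * (((n:ℝ)+1) + t) := by
    rw [Finset.sum_Icc_succ_top (by omega : 1 ≤ n+1), if_pos rfl]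
    have hrest : ∀ j ∈ Finset.Icc 1 n,
        w t n j * (if j = n+1 then ((n:ℝ)+1) + t else s t (n+1) + ((n:ℝ)+1) + t)
        = w t n j * (s t (n+1) + ((n:ℝ)+1) + t) := by
      intro j hj
      rw [if_neg (by have := (Finset.mem_Icc.mp hj).2; omega)]
    rw [Finset.sum_congr rfl hrest, ← Finset.sum_mul]
    have hS' : ∑ j ∈ Finset.Icc 1 n, w t n j
        = 1 - (1-t)^(n+2) - t^(n+2) - ((n:ℝ)+2)*t^(n+1)*(1-t) := by
      have := w_sum t n
      rw [Finset.sum_Icc_succ_top (by omega : 1 ≤ n+1), w_top] at this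
      linarith
    rw [hS', w_top]
  rw [heval] at key
  have hv := v_succ' t n
  have hs2 : s t (n+2) = v t (n+2) - ((n:ℝ)+1) - t := s_level t n
  have hs1 : v t (n+1) = s t (n+1) + ((n:ℝ)+1) - 1 + t := by
    rw [v_eq t (n+1)]; push_cast; ring
  rw [hs2, hv, hs1]
  have hid : t^(n+2)*(1-t) - (1-t)^(n+2)
      + (1 - ((n:ℝ)+2)*t^(n+1) + ((n:ℝ)+1)*t^(n+2)) * s t (n+1)
      = ((n:ℝ)+2)*t^(n+2) + (s t (n+1) + ((n:ℝ)+1) - 1 + t)*(1-t)^(n+2)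
        + ((1 - (1-t)^(n+2) - t^(n+2) - ((n:ℝ)+2)*t^(n+1)*(1-t)) * (s t (n+1) + ((n:ℝ)+1) + t)
          + ((n:ℝ)+2)*t^(n+1)*(1-t) * (((n:ℝ)+1) + t)) - ((n:ℝ)+1) - t := by
    ring
  rw [hid]
  linarith [key]

/-- Upper bound in the nonnegative regime. -/
lemma sUBpos (ht0 : 0 ≤ t) (ht1 : t ≤ 1)
    (hch : ∀ k, 2 ≤ k → k ≤ n+1 → s t k ≤ s t (n+1)) (hpos : 0 ≤ s t (n+1)) :
    s t (n+2) ≤ t^(n+2)*(1-t) - (1-t)^(n+2) + (1 - t^(n+2)) * s t (n+1) := by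
  have key : ∑ j ∈ Finset.Icc 1 (n+1), w t n j * M t (n+1) j
      ≤ ∑ j ∈ Finset.Icc 1 (n+1), w t n j * (s t (n+1) + ((n:ℝ)+1) + t) := by
    refine Finset.sum_le_sum (fun j hj => ?_)
    refine mul_le_mul_of_nonneg_left ?_ (w_nonneg t n ht0 ht1 j)
    have h1j : 1 ≤ j := (Finset.mem_Icc.mp hj).1
    have hjn : j ≤ n+1 := (Finset.mem_Icc.mp hj).2
    have hb := M_bound t (n+1) j h1j hjn (s t (n+1)) (fun i hi1 hi2 => ?_)
    · push_cast at hb ⊢; linarith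
    · rcases Nat.lt_or_ge i (n+1) with hlt | hge
      · have h2 : 2 ≤ n+1+1-i := by omega
        have h3 : n+1+1-i ≤ n+1 := by omega
        exact hch _ h2 h3
      · have hieq : i = n+1 := by omega
        subst hieq
        rw [show n+1+1-(n+1) = 1 from by omega, s_one]
        exact hpos
  rw [← Finset.sum_mul, w_sum] at key
  have hv := v_succ' t n
  have hs2 : s t (n+2) = v t (n+2) - ((n:ℝ)+1) - t := s_level t n
  have hs1 : v t (n+1) = s t (n+1) + ((n:ℝ)+1) - 1 + t := by
    rw [v_eq t (n+1)]; push_cast; ring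
  rw [hs2, hv, hs1]
  have hid : t^(n+2)*(1-t) - (1-t)^(n+2) + (1 - t^(n+2)) * s t (n+1)
      = ((n:ℝ)+2)*t^(n+2) + (s t (n+1) + ((n:ℝ)+1) - 1 + t)*(1-t)^(n+2)
        + (1 - (1-t)^(n+2) - t^(n+2)) * (s t (n+1) + ((n:ℝ)+1) + t) - ((n:ℝ)+1) - t := by
    ring
  rw [hid]
  linarith [key]
end Structural

section Gfacts
variable (t : ℝ)

lemma gstep (ht : 1/2 ≤ t) (ht1 : t ≤ 1) (m : ℕ) :
    t * (t^(m+1)*(1-t) - (1-t)^(m+1)) ≤ t^(m+2)*(1-t) - (1-t)^(m+2) := by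
  have e1 : t^(m+2) = t^(m+1)*t := by rw [show m+2 = m+1+1 by omega, pow_succ]
  have f1 : (1-t)^(m+2) = (1-t)^(m+1)*(1-t) := by rw [show m+2 = m+1+1 by omega, pow_succ]
  rw [e1, f1]
  nlinarith [mul_nonneg (pow_nonneg (by linarith : (0:ℝ) ≤ 1-t) (m+1))
    (by linarith : (0:ℝ) ≤ 2*t - 1)]

lemma fle1 (ht0 : 0 ≤ t) (ht1 : t ≤ 1) : ∀ m : ℕ, ((m:ℝ)+1)*t^m - (m:ℝ)*t^(m+1) ≤ 1 := by
  intro m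
  induction m with
  | zero => simp
  | succ k ih =>
    have e1 : t^(k+1) = t^k*t := pow_succ t k
    have e2 : t^(k+1+1) = t^k*t*t := by rw [pow_succ, e1]
    push_cast
    rw [e1, e2]
    push_cast at ih
    rw [e1] at ih
    nlinarith [mul_nonneg (mul_nonneg (by positivity : (0:ℝ) ≤ (k:ℝ)+1)
      (pow_nonneg ht0 k)) (sq_nonneg (1-t)), pow_nonneg ht0 k]
end Gfacts


section Normalized
variable (t : ℝ) (m : ℕ)

lemma sLB_N (ht0 : 0 ≤ t) (ht1 : t ≤ 1) :
    t^(m+3)*(1-t) - (1-t)^(m+3)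
      + (1 - ((m:ℝ)+3)*t^(m+2) + ((m:ℝ)+2)*t^(m+3)) * s t (m+2) ≤ s t (m+3) := by
  have h := sLB t (m+1) ht0 ht1
  simp only [show m+1+2 = m+3 from rfl, show m+1+1 = m+2 from rfl] at h
  push_cast at h
  linarith

lemma sLB'_N (ht0 : 0 ≤ t) (ht1 : t ≤ 1) :
    t^(m+3)*(1-t) - (1-t)^(m+3) + (1 - t^(m+3)) * s t (m+2) ≤ s t (m+3) := by
  have h := sLB' t (m+1) ht0 ht1
  simp only [show m+1+2 = m+3 from rfl, show m+1+1 = m+2 from rfl] at h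
  linarith

lemma sUBneg_N (ht0 : 0 ≤ t) (ht1 : t ≤ 1)
    (hch : ∀ k, 2 ≤ k → k ≤ m+2 → s t k ≤ s t (m+2)) (hneg : s t (m+2) ≤ 0) :
    s t (m+3) ≤ t^(m+3)*(1-t) - (1-t)^(m+3)
      + (1 - ((m:ℝ)+3)*t^(m+2) + ((m:ℝ)+2)*t^(m+3)) * s t (m+2) := by
  have h := sUBneg t (m+1) ht0 ht1 hch hneg
  simp only [show m+1+2 = m+3 from rfl, show m+1+1 = m+2 from rfl] at h
  push_cast at h
  linarith

lemma sUBpos_N (ht0 : 0 ≤ t) (ht1 : t ≤ 1)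
    (hch : ∀ k, 2 ≤ k → k ≤ m+2 → s t k ≤ s t (m+2)) (hpos : 0 ≤ s t (m+2)) :
    s t (m+3) ≤ t^(m+3)*(1-t) - (1-t)^(m+3) + (1 - t^(m+3)) * s t (m+2) := by
  have h := sUBpos t (m+1) ht0 ht1 hch hpos
  simp only [show m+1+2 = m+3 from rfl, show m+1+1 = m+2 from rfl] at h
  linarith
end Normalized

/-- abstract linear step for the negativity invariant -/
lemma bstep_core (E D B G3 G4 s2 s3 : ℝ)
    (hBnn : 0 ≤ B) (hDpos : 0 < D) (hEnn : 0 ≤ E) (hDB : D + B = 1)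
    (hcore : E*G3 ≤ D*G4) (hub : s3 ≤ G3 + B*s2) (hns : D*s2 ≤ G3) :
    E*s3 ≤ G4 := by
  have h1 : E*s3 ≤ E*(G3 + B*s2) := mul_le_mul_of_nonneg_left hub hEnn
  have h2 : (E*B)*(D*s2) ≤ (E*B)*G3 := mul_le_mul_of_nonneg_left hns (mul_nonneg hEnn hBnn)
  have h3 : D*(E*s3) ≤ D*(E*(G3+B*s2)) := mul_le_mul_of_nonneg_left h1 hDpos.le
  have h4 : D*(E*(G3+B*s2)) = D*E*G3 + (E*B)*(D*s2) := by ring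
  have h5 : D*E*G3 + (E*B)*G3 = (D+B)*(E*G3) := by ring
  have h6 : (D+B)*(E*G3) = E*G3 := by rw [hDB]; ring
  exact le_of_mul_le_mul_left (by linarith : D*(E*s3) ≤ D*G4) hDpos

/-- the core polynomial inequality -/
lemma bcore (t : ℝ) (m : ℕ) (ht : 1/2 ≤ t) (ht1 : t ≤ 1)
    (hG4 : t^(m+4)*(1-t) - (1-t)^(m+4) ≤ 0) :
    (t^(m+3)*(((m:ℝ)+4) - ((m:ℝ)+3)*t)) * (t^(m+3)*(1-t) - (1-t)^(m+3))
      ≤ (t^(m+2)*(((m:ℝ)+3) - ((m:ℝ)+2)*t)) * (t^(m+4)*(1-t) - (1-t)^(m+4)) := by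
  have e1 : t^(m+3) = t^(m+2)*t := by rw [show m+3 = m+2+1 by omega, pow_succ]
  have e2 : t^(m+4) = t^(m+2)*t^2 := by rw [show m+4 = m+2+2 by omega, pow_add]
  have f1 : (1-t)^(m+3) = (1-t)^(m+2)*(1-t) := by rw [show m+3 = m+2+1 by omega, pow_succ]
  have f2 : (1-t)^(m+4) = (1-t)^(m+2)*(1-t)^2 := by rw [show m+4 = m+2+2 by omega, pow_add]
  rw [e2, f2] at hG4
  rw [e1, e2, f1, f2]
  have ha : 0 ≤ t^(m+2) := pow_nonneg (by linarith) _
  have hb0 : 0 ≤ (1-t)^(m+2) := pow_nonneg (by linarith) _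
  generalize t^(m+2) = a at *
  generalize (1-t)^(m+2) = b at *
  have hreg : a*t^2*(1-t) ≤ b*(1-t)^2 := by nlinarith [hG4]
  have hK : (1-t)^2 ≤ ((m:ℝ)+3)*(3*t-1) - (2*(m:ℝ)+5)*t^2 := by
    nlinarith [mul_nonneg (by linarith : (0:ℝ) ≤ 2*t-1)
      (by nlinarith : (0:ℝ) ≤ ((m:ℝ)+2)*(1-t)+2-t)]
  have h7 : a*t^2*(1-t) ≤ b*(((m:ℝ)+3)*(3*t-1) - (2*(m:ℝ)+5)*t^2) :=
    le_trans hreg (mul_le_mul_of_nonneg_left hK hb0)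
  nlinarith [mul_nonneg (mul_nonneg ha (by linarith : (0:ℝ) ≤ 1-t)) (sub_nonneg.mpr h7)]

set_option maxHeartbeats 1000000 in
theorem master (t : ℝ) (ht : 1/2 ≤ t) (htphi : t ≤ (Real.sqrt 5 - 1)/2) :
    ∀ n, 2 ≤ n →
      (∀ k, 2 ≤ k → k ≤ n → s t k ≤ s t n) ∧
      (t^(n+1)*(1-t) - (1-t)^(n+1) ≤ 0 →
        t^n*(((n:ℝ)+1) - (n:ℝ)*t) * s t n ≤ t^(n+1)*(1-t) - (1-t)^(n+1)) ∧
      (0 < s t n → t^(n+1) * s t n ≤ t^(n+1)*(1-t) - (1-t)^(n+1)) := by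
  have h5 : Real.sqrt 5 ^ 2 = 5 := Real.sq_sqrt (by norm_num)
  have h5nn : 0 ≤ Real.sqrt 5 := Real.sqrt_nonneg 5
  have h53 : Real.sqrt 5 ≤ 3 := by nlinarith
  have ht1 : t ≤ 1 := by nlinarith
  have ht0 : (0:ℝ) ≤ t := by linarith
  have htpos : (0:ℝ) < t := by linarith
  have hphi1 : t^2 + t - 1 ≤ 0 := by
    nlinarith [mul_nonneg (sub_nonneg.mpr htphi)
      (by nlinarith : (0:ℝ) ≤ t + 1 + (Real.sqrt 5 - 1)/2)]
  refine Nat.le_induction ?_ ?_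
  · refine ⟨fun k hk2 hkle => ?_, fun _ => ?_, fun hpos => ?_⟩
    · have hk : k = 2 := by omega
      subst hk; exact le_rfl
    · rw [s_two]
      push_cast
      norm_num
      nlinarith [mul_nonneg (mul_nonneg (by linarith : (0:ℝ) ≤ 1-t)
        (by linarith : (0:ℝ) ≤ 2*t-1)) (sq_nonneg (1-t^2))]
    · exfalso
      rw [s_two] at hpos
      nlinarith [mul_nonneg (by linarith : (0:ℝ) ≤ 1-t)
        (by linarith : (0:ℝ) ≤ 1 - t - t^2)]
  · rintro n hn ⟨iha, ihb, ihc⟩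
    obtain ⟨m, rfl⟩ : ∃ m, n = m + 2 := ⟨n - 2, by omega⟩
    simp only [show m+2+1 = m+3 from rfl] at ihb ihc ⊢
    simp only [show m+3+1 = m+4 from rfl]
    push_cast at ihb ihc ⊢
    -- power bridges
    have e1 : t^(m+3) = t^(m+2)*t := by rw [show m+3 = m+2+1 by omega, pow_succ]
    have e4 : t^(m+4) = t^(m+3)*t := by rw [show m+4 = m+3+1 by omega, pow_succ]
    -- basic facts
    have hBnn : (0:ℝ) ≤ 1 - ((m:ℝ)+3)*t^(m+2) + ((m:ℝ)+2)*t^(m+3) := by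
      have hf := fle1 t ht0 ht1 (m+2)
      push_cast at hf
      rw [show m+2+1 = m+3 from rfl] at hf
      linarith
    have hDnn : (0:ℝ) ≤ t^(m+2)*(((m:ℝ)+3) - ((m:ℝ)+2)*t) :=
      mul_nonneg (pow_nonneg ht0 _) (by nlinarith)
    have hDpos : (0:ℝ) < t^(m+2)*(((m:ℝ)+3) - ((m:ℝ)+2)*t) :=
      mul_pos (pow_pos htpos _) (by nlinarith)
    have hEnn : (0:ℝ) ≤ t^(m+3)*(((m:ℝ)+4) - ((m:ℝ)+3)*t) :=
      mul_nonneg (pow_nonneg ht0 _) (by nlinarith)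
    have hgs : t*(t^(m+3)*(1-t) - (1-t)^(m+3)) ≤ t^(m+4)*(1-t) - (1-t)^(m+4) := by
      have := gstep t ht ht1 (m+2)
      simpa [show m+2+1 = m+3 from rfl, show m+2+2 = m+4 from rfl] using this
    -- normalized structural bounds at level m+3
    have hlbN := sLB_N t m ht0 ht1
    have hlbN' := sLB'_N t m ht0 ht1
    have hubNneg := sUBneg_N t m ht0 ht1 iha
    have hubNpos := sUBpos_N t m ht0 ht1 iha
    -- bridge equalities for mixed atoms
    have hbr2 : t^(m+3)*s t (m+2) = t^(m+2)*t*s t (m+2) := by rw [e1]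
    have hbr2m : (m:ℝ)*(t^(m+3)*s t (m+2)) = (m:ℝ)*(t^(m+2)*t*s t (m+2)) := by rw [e1]
    have hbr3 : t^(m+4)*s t (m+3) = t^(m+3)*t*s t (m+3) := by rw [e4]
    -- chain link
    have hlink : s t (m+2) ≤ s t (m+3) := by
      by_cases hs2 : s t (m+2) ≤ 0
      · by_cases hG3 : t^(m+3)*(1-t) - (1-t)^(m+3) ≤ 0
        · have hb2 := ihb hG3
          linarith [hlbN, hb2, hbr2, hbr2m]
        · push_neg at hG3
          have hDS : t^(m+2)*(((m:ℝ)+3) - ((m:ℝ)+2)*t)*s t (m+2) ≤ 0 :=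
            mul_nonpos_of_nonneg_of_nonpos hDnn hs2
          linarith [hlbN, hDS, hbr2, hbr2m]
      · push_neg at hs2
        have hc2 := ihc hs2
        linarith [hlbN', hc2]
    refine ⟨fun k hk2 hkle => ?_, fun hG4 => ?_, fun hpos3 => ?_⟩
    · rcases Nat.lt_or_ge k (m+3) with h | h
      · exact le_trans (iha k hk2 (by omega)) hlink
      · have : k = m+3 := by omega
        subst this; exact le_rfl
    · -- invariant (b)
      have hG3le : t^(m+3)*(1-t) - (1-t)^(m+3) ≤ 0 := by nlinarith [hgs, htpos]
      have hns0 := ihb hG3le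
      have hns : t^(m+2)*(((m:ℝ)+3) - ((m:ℝ)+2)*t) * s t (m+2)
          ≤ t^(m+3)*(1-t) - (1-t)^(m+3) := by linarith [hns0]
      have hs2le : s t (m+2) ≤ 0 := by nlinarith [hns, hDpos]
      have hub := hubNneg hs2le
      have hDB : t^(m+2)*(((m:ℝ)+3) - ((m:ℝ)+2)*t)
          + (1 - ((m:ℝ)+3)*t^(m+2) + ((m:ℝ)+2)*t^(m+3)) = 1 := by
        rw [e1]; ring
      have hcore := bcore t m ht ht1 hG4
      have hfin := bstep_core
        (t^(m+3)*(((m:ℝ)+4) - ((m:ℝ)+3)*t))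
        (t^(m+2)*(((m:ℝ)+3) - ((m:ℝ)+2)*t))
        (1 - ((m:ℝ)+3)*t^(m+2) + ((m:ℝ)+2)*t^(m+3))
        (t^(m+3)*(1-t) - (1-t)^(m+3))
        (t^(m+4)*(1-t) - (1-t)^(m+4))
        (s t (m+2)) (s t (m+3))
        hBnn hDpos hEnn hDB hcore hub hns
      linarith [hfin]
    · -- invariant (c)
      by_cases hs2 : s t (m+2) ≤ 0
      · have hub := hubNneg hs2
        have hBS : (1 - ((m:ℝ)+3)*t^(m+2) + ((m:ℝ)+2)*t^(m+3)) * s t (m+2) ≤ 0 :=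
          mul_nonpos_of_nonneg_of_nonpos hBnn hs2
        have hG3pos : 0 < t^(m+3)*(1-t) - (1-t)^(m+3) := by linarith
        have hp1 : t^(m+4) ≤ t := by
          calc t^(m+4) ≤ t^1 := pow_le_pow_of_le_one ht0 ht1 (by omega)
          _ = t := pow_one t
        have hs3G3 : s t (m+3) ≤ t^(m+3)*(1-t) - (1-t)^(m+3) := by linarith
        have h1 : t^(m+4)*s t (m+3) ≤ t^(m+4)*(t^(m+3)*(1-t) - (1-t)^(m+3)) :=
          mul_le_mul_of_nonneg_left hs3G3 (pow_nonneg ht0 (m+4))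
        have h3 : t^(m+4)*(t^(m+3)*(1-t) - (1-t)^(m+3)) ≤ t*(t^(m+3)*(1-t) - (1-t)^(m+3)) :=
          mul_le_mul_of_nonneg_right hp1 hG3pos.le
        linarith [hgs]
      · push_neg at hs2
        have hub := hubNpos hs2.le
        have hc2 := ihc hs2
        have hao : (0:ℝ) ≤ 1 - t^(m+3) := by
          have := pow_le_one₀ ht0 ht1 (n := m+3)
          linarith
        have ha1 := mul_le_mul_of_nonneg_left hub (pow_nonneg ht0 (m+3))
        have ha2 := mul_le_mul_of_nonneg_left hc2 hao
        have h1 : t^(m+3)*s t (m+3) ≤ t^(m+3)*(1-t) - (1-t)^(m+3) := by nlinarith [ha1, ha2]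
        have h2 := mul_le_mul_of_nonneg_left h1 ht0
        linarith [hgs, hbr3, h2]

section Mono
variable (q p : ℝ)

lemma Epow (h0 : 0 ≤ q) (hqp : q ≤ p) (hp1 : p ≤ 1) :
    ∀ k : ℕ, (k:ℝ)*q^k*(p-q) ≤ p^k - q^k := by
  intro k
  induction k with
  | zero => simp
  | succ j ih =>
    have hq1 : q ≤ 1 := le_trans hqp hp1
    have hd : 0 ≤ p^j - q^j := by
      have := pow_le_pow_left₀ h0 hqp j
      linarith
    have h1 : q*(p^j - q^j) ≤ p*(p^j - q^j) := mul_le_mul_of_nonneg_right hqp hd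
    have h2 : q*((j:ℝ)*q^j*(p-q)) ≤ q*(p^j - q^j) := mul_le_mul_of_nonneg_left ih h0
    have h4 : 0 ≤ p - q := by linarith
    have h3 : q^j*q ≤ q^j*1 := mul_le_mul_of_nonneg_left hq1 (pow_nonneg h0 j)
    have h5 : q^j*q*(p-q) ≤ q^j*1*(p-q) := mul_le_mul_of_nonneg_right h3 h4
    have e1 : q^(j+1) = q^j*q := pow_succ q j
    have e2 : p^(j+1) = p^j*p := pow_succ p j
    push_cast
    rw [e1, e2]
    linarith [h1, h2, h5]

lemma fmono (h0 : 0 ≤ q) (hqp : q ≤ p) (hp1 : p ≤ 1) (k : ℕ) :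
    ((k:ℝ)+1)*q^k - (k:ℝ)*q^(k+1) ≤ ((k:ℝ)+1)*p^k - (k:ℝ)*p^(k+1) := by
  cases k with
  | zero => simp
  | succ j =>
    have hd1 : 0 ≤ p^(j+1) - q^(j+1) := by
      have := pow_le_pow_left₀ h0 hqp (j+1)
      linarith
    have hE := Epow q p h0 hqp hp1 (j+1)
    have hsplitS : ((j:ℝ)+1)*(p^(j+1+1) - q^(j+1+1))
        = ((j:ℝ)+1)*(p*(p^(j+1)-q^(j+1)) + q^(j+1)*(p-q)) := by ring
    have hjnn : (0:ℝ) ≤ (j:ℝ)+1 := by positivity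
    have hh : ((j:ℝ)+1)*(p*(p^(j+1)-q^(j+1))) ≤ ((j:ℝ)+1)*(p^(j+1)-q^(j+1)) := by
      nlinarith [mul_nonneg hjnn hd1]
    push_cast
    push_cast at hE
    linarith [hh, hE, hsplitS, mul_le_mul_of_nonneg_left hE hjnn]

lemma powmul_mono (hq : 1/2 ≤ q) (hqp : q ≤ p) (hp23 : p ≤ 2/3) :
    ∀ k, 2 ≤ k → q^k*(1-q) ≤ p^k*(1-p) := by
  have h0 : (0:ℝ) ≤ q := by linarith
  have hp0 : (0:ℝ) ≤ p := by linarith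
  refine Nat.le_induction ?_ ?_
  · have h1 : p^2 ≤ (2/3)*p := by nlinarith
    have h2 : q^2 ≤ (2/3)*q := by nlinarith
    have h3 : p*q ≤ (2/3)*q := by nlinarith
    have h4 : 0 ≤ p + q - (p^2 + p*q + q^2) := by linarith
    nlinarith [mul_nonneg (by linarith : (0:ℝ) ≤ p - q) h4]
  · intro k hk ih
    have hX : 0 ≤ q^k*(1-q) := mul_nonneg (pow_nonneg h0 k) (by linarith)
    have e1 : q^(k+1) = q^k*q := pow_succ q k
    have e2 : p^(k+1) = p^k*p := pow_succ p k
    have h1 : q*(q^k*(1-q)) ≤ p*(q^k*(1-q)) := mul_le_mul_of_nonneg_right hqp hX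
    have h2 : p*(q^k*(1-q)) ≤ p*(p^k*(1-p)) := mul_le_mul_of_nonneg_left ih hp0
    rw [e1, e2]
    linarith [h1, h2]
end Mono

section PhiFacts

lemma sqrt5_sq : Real.sqrt 5 ^ 2 = 5 := Real.sq_sqrt (by norm_num)
lemma sqrt5_nn : 0 ≤ Real.sqrt 5 := Real.sqrt_nonneg 5
lemma sqrt5_gt : 2.236 ≤ Real.sqrt 5 := by nlinarith [sqrt5_sq, sqrt5_nn]
lemma sqrt5_lt : Real.sqrt 5 ≤ 2.2361 := by nlinarith [sqrt5_sq, sqrt5_nn]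

lemma phi_nonneg : 0 ≤ (Real.sqrt 5 - 1)/2 := by nlinarith [sqrt5_gt]
lemma phi_pos : 0 < (Real.sqrt 5 - 1)/2 := by nlinarith [sqrt5_gt]
lemma phi_le1 : (Real.sqrt 5 - 1)/2 ≤ 1 := by nlinarith [sqrt5_lt]
lemma phi_lt23 : (Real.sqrt 5 - 1)/2 < 2/3 := by nlinarith [sqrt5_lt]

/-- decay of `x_j = (j+1)φ^j` -/
lemma xdec (j : ℕ) (hj : 3 ≤ j) :
    ((j:ℝ)+2)*((Real.sqrt 5 - 1)/2)^(j+1) ≤ (4/5)*(((j:ℝ)+1)*((Real.sqrt 5 - 1)/2)^j) := by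
  have hj3 : (3:ℝ) ≤ (j:ℝ) := by exact_mod_cast hj
  have hA : 0 ≤ ((Real.sqrt 5 - 1)/2)^j := pow_nonneg phi_nonneg j
  have hcoef : 5*((Real.sqrt 5 - 1)/2)*((j:ℝ)+2) ≤ 4*((j:ℝ)+1) := by
    nlinarith [sqrt5_lt]
  have e1 : ((Real.sqrt 5 - 1)/2)^(j+1) = ((Real.sqrt 5 - 1)/2)^j*((Real.sqrt 5 - 1)/2) :=
    pow_succ _ j
  rw [e1]
  nlinarith [mul_le_mul_of_nonneg_left hcoef hA]

lemma phi_cube : ((Real.sqrt 5 - 1)/2)^3 = Real.sqrt 5 - 2 := by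
  have h5 := sqrt5_sq
  linear_combination ((Real.sqrt 5 - 3)/8) * h5

lemma xlt1 (j : ℕ) (hj : 3 ≤ j) : ((j:ℝ)+1)*((Real.sqrt 5 - 1)/2)^j < 1 := by
  induction j, hj using Nat.le_induction with
  | base =>
    push_cast
    rw [phi_cube]
    nlinarith [sqrt5_lt]
  | succ j hj ih =>
    have h := xdec j hj
    have hnn : 0 ≤ ((j:ℝ)+1)*((Real.sqrt 5 - 1)/2)^j :=
      mul_nonneg (by positivity) (pow_nonneg phi_nonneg j)
    push_cast
    push_cast at ih h
    linarith

/-- key comparison: `B_{m+3}(φ) ≥ 1 - (m+4)φ^(m+3)` -/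
lemma Bphi (u : ℕ) :
    ((u:ℝ)+3)*((Real.sqrt 5 - 1)/2)^(u+2) - ((u:ℝ)+2)*((Real.sqrt 5 - 1)/2)^(u+3)
      ≤ ((u:ℝ)+4)*((Real.sqrt 5 - 1)/2)^(u+3) := by
  have e1 : ((Real.sqrt 5 - 1)/2)^(u+3) = ((Real.sqrt 5 - 1)/2)^(u+2)*((Real.sqrt 5 - 1)/2) := by
    rw [show u+3 = u+2+1 by omega, pow_succ]
  rw [e1]
  have hA : 0 ≤ ((Real.sqrt 5 - 1)/2)^(u+2) := pow_nonneg phi_nonneg _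
  have h2phi : (0:ℝ) ≤ 2*((Real.sqrt 5 - 1)/2) - 1 := by nlinarith [sqrt5_gt]
  have hj : (0:ℝ) ≤ (u:ℝ)+3 := by positivity
  nlinarith [mul_nonneg (mul_nonneg hA hj) h2phi]
end PhiFacts

set_option maxHeartbeats 1000000 in
lemma delta (p q : ℝ) (hq : 1/2 ≤ q) (hqp : q < p) (hp : p ≤ (Real.sqrt 5 - 1)/2)
    (n : ℕ) (hn : 2 ≤ n) (hneg : ∀ k, 2 ≤ k → k + 1 ≤ n → s p k ≤ 0) :
    (2 - (p^2 + p*q + q^2)) *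
      (∏ j ∈ Finset.Icc 3 n, (1 - ((j:ℝ)+1)*((Real.sqrt 5 - 1)/2)^j)) * (p-q)
      ≤ s p n - s q n := by
  have hq0 : (0:ℝ) ≤ q := by linarith
  have hp12 : (1:ℝ)/2 ≤ p := by linarith
  have hp23 : p ≤ 2/3 := le_trans hp phi_lt23.le
  have hp1 : p ≤ 1 := le_trans hp phi_le1
  have hp0 : (0:ℝ) ≤ p := by linarith
  have hq1 : q ≤ 1 := by linarith
  have hqphi : q ≤ (Real.sqrt 5 - 1)/2 := le_trans hqp.le hp
  have hK5 : (0:ℝ) < 2 - (p^2 + p*q + q^2) := by nlinarith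
  have hpq : (0:ℝ) < p - q := by linarith
  have key : ∀ m, 2 ≤ m → m ≤ n →
      (2 - (p^2 + p*q + q^2)) *
        (∏ j ∈ Finset.Icc 3 m, (1 - ((j:ℝ)+1)*((Real.sqrt 5 - 1)/2)^j)) * (p-q)
        ≤ s p m - s q m := by
    intro m hm
    induction m, hm using Nat.le_induction with
    | base =>
      intro _
      rw [s_two, s_two, Finset.Icc_eq_empty (by omega), Finset.prod_empty]
      exact le_of_eq (by ring)
    | succ m hm ih =>
      intro hm1
      have hmn : m ≤ n := by omega
      have hΔ := ih hmn
      obtain ⟨u, rfl⟩ : ∃ u, m = u + 2 := ⟨m - 2, by omega⟩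
      have hPpos : (0:ℝ) < ∏ j ∈ Finset.Icc 3 (u+2), (1 - ((j:ℝ)+1)*((Real.sqrt 5 - 1)/2)^j) :=
        Finset.prod_pos (fun j hj => by
          have := xlt1 j (Finset.mem_Icc.mp hj).1
          linarith)
      have hKP : (0:ℝ) < (2 - (p^2 + p*q + q^2)) *
          (∏ j ∈ Finset.Icc 3 (u+2), (1 - ((j:ℝ)+1)*((Real.sqrt 5 - 1)/2)^j)) * (p-q) :=
        mul_pos (mul_pos hK5 hPpos) hpq
      have hΔnn : 0 ≤ s p (u+2) - s q (u+2) := by linarith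
      have hspneg : s p (u+2) ≤ 0 := hneg (u+2) (by omega) (by omega)
      have hsqneg : s q (u+2) ≤ 0 := by linarith
      have chainq := (master q hq hqphi (u+2) (by omega)).1
      have hUq := sUBneg_N q u hq0 hq1 chainq hsqneg
      have hLp := sLB_N p u hp0 hp1
      -- g is monotone
      have hgm1 := powmul_mono q p hq hqp.le hp23 (u+3) (by omega)
      have hgm2 : (1-p)^(u+3) ≤ (1-q)^(u+3) :=
        pow_le_pow_left₀ (by linarith) (by linarith) _
      -- B is antitone
      have hBm := fmono q p hq0 hqp.le hp1 (u+2)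
      simp only [show u+2+1 = u+3 from rfl] at hBm
      push_cast at hBm
      -- sign term
      have h1 : 0 ≤ ((1 - ((u:ℝ)+3)*p^(u+2) + ((u:ℝ)+2)*p^(u+3))
          - (1 - ((u:ℝ)+3)*q^(u+2) + ((u:ℝ)+2)*q^(u+3))) * s q (u+2) := by
        have hA : ((1 - ((u:ℝ)+3)*p^(u+2) + ((u:ℝ)+2)*p^(u+3))
            - (1 - ((u:ℝ)+3)*q^(u+2) + ((u:ℝ)+2)*q^(u+3))) ≤ 0 := by linarith
        nlinarith [mul_nonneg (neg_nonneg.mpr hA) (neg_nonneg.mpr hsqneg)]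
      -- lower bound for B p
      have hfm2 := fmono p ((Real.sqrt 5 - 1)/2) hp0 hp phi_le1 (u+2)
      simp only [show u+2+1 = u+3 from rfl] at hfm2
      push_cast at hfm2
      have hBphi := Bphi u
      have hBp_lb : 1 - ((u:ℝ)+4)*((Real.sqrt 5 - 1)/2)^(u+3)
          ≤ 1 - ((u:ℝ)+3)*p^(u+2) + ((u:ℝ)+2)*p^(u+3) := by linarith
      have hx1 : ((u:ℝ)+4)*((Real.sqrt 5 - 1)/2)^(u+3) < 1 := by
        have := xlt1 (u+3) (by omega)
        push_cast at this
        linarith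
      have hBpnn : (0:ℝ) ≤ 1 - ((u:ℝ)+4)*((Real.sqrt 5 - 1)/2)^(u+3) := by linarith
      have c1 := mul_le_mul_of_nonneg_left hΔ hBpnn
      have c2 := mul_le_mul_of_nonneg_right hBp_lb hΔnn
      have hprod : (∏ j ∈ Finset.Icc 3 (u+3), (1 - ((j:ℝ)+1)*((Real.sqrt 5 - 1)/2)^j))
          = (∏ j ∈ Finset.Icc 3 (u+2), (1 - ((j:ℝ)+1)*((Real.sqrt 5 - 1)/2)^j))
            * (1 - ((u:ℝ)+4)*((Real.sqrt 5 - 1)/2)^(u+3)) := by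
        rw [Finset.prod_Icc_succ_top (by omega : 3 ≤ u+3)]
        congr 1
        push_cast
        ring
      rw [show u+2+1 = u+3 from rfl, hprod]
      nlinarith [hLp, hUq, hgm1, hgm2, h1, c1, c2]
  exact key n hn le_rfl

lemma Cseq_pos (n : ℕ) : 0 < Cseq n := by
  rw [Cseq]
  have h : 0 < ∏ j ∈ Finset.Icc 3 n, (1 - ((j : ℝ) + 1) * ((Real.sqrt 5 - 1) / 2) ^ j) := by
    refine Finset.prod_pos fun j hj => ?_
    have := xlt1 j (Finset.mem_Icc.mp hj).1
    linarith
  linarith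

lemma Cseq_succ (k : ℕ) (hk : 2 ≤ k) :
    Cseq (k+1) = Cseq k * (1 - (((k:ℝ)+1) + 1) * ((Real.sqrt 5 - 1) / 2) ^ (k+1)) := by
  rw [Cseq, Cseq, Finset.prod_Icc_succ_top (by omega : 3 ≤ k+1), ← mul_assoc]
  push_cast
  ring

lemma xnn (j : ℕ) : 0 ≤ ((j:ℝ)+1) * ((Real.sqrt 5 - 1) / 2) ^ j :=
  mul_nonneg (by positivity) (pow_nonneg phi_nonneg j)

lemma Cseq_anti : Antitone Cseq := by
  refine antitone_nat_of_succ_le fun k => ?_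
  match k with
  | 0 =>
    rw [Cseq, Cseq, Finset.Icc_eq_empty (by omega), Finset.Icc_eq_empty (by omega)]
  | 1 =>
    rw [Cseq, Cseq, Finset.Icc_eq_empty (by omega), Finset.Icc_eq_empty (by omega)]
  | (k+2) =>
    rw [Cseq_succ (k+2) (by omega)]
    have h1 := Cseq_pos (k+2)
    have h2 := xnn (k+2+1)
    push_cast at h2 ⊢
    nlinarith

lemma Cseq_strict (n : ℕ) (hn : 2 ≤ n) : Cseq (n+1) < Cseq n := by
  rw [Cseq_succ n hn]
  have h1 := Cseq_pos n
  have h2 : 0 < (((n:ℝ)+1) + 1) * ((Real.sqrt 5 - 1) / 2) ^ (n+1) :=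
    mul_pos (by positivity) (pow_pos phi_pos _)
  nlinarith

lemma xtail : ∀ j : ℕ, 10 ≤ j → ((j:ℝ)+1) * ((Real.sqrt 5 - 1) / 2) ^ j ≤ (1/10)*(4/5)^(j-10 : ℕ) := by
  intro j hj
  induction j, hj using Nat.le_induction with
  | base =>
    have hphi2 : ((Real.sqrt 5 - 1) / 2)^2 ≤ 0.382 := by nlinarith [sqrt5_gt, sqrt5_sq]
    have hnn2 : 0 ≤ ((Real.sqrt 5 - 1) / 2)^2 := sq_nonneg _
    have h10 : ((Real.sqrt 5 - 1) / 2)^10 = (((Real.sqrt 5 - 1) / 2)^2)^5 := by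
      rw [← pow_mul]
    have h5' : (((Real.sqrt 5 - 1) / 2)^2)^5 ≤ (0.382:ℝ)^5 := pow_le_pow_left₀ hnn2 hphi2 5
    push_cast
    rw [h10]
    norm_num
    nlinarith [h5']
  | succ j hj ih =>
    have hd := xdec j (by omega)
    have e : (4/5:ℝ)^(j-9) = (4/5:ℝ)^(j-10)*(4/5) := by
      rw [show j-9 = (j-10)+1 by omega, pow_succ]
    push_cast
    push_cast at ih hd
    rw [e]
    linarith

lemma Cseq_lower9 : ∀ k, 9 ≤ k → (1/2)*(1 + (4/5:ℝ)^(k-9))*Cseq 9 ≤ Cseq k := by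
  intro k hk
  induction k, hk using Nat.le_induction with
  | base =>
    rw [show (9:ℕ) - 9 = 0 from rfl, pow_zero]
    have := Cseq_pos 9
    nlinarith
  | succ k hk ih =>
    rw [Cseq_succ k (by omega)]
    have hx := xtail (k+1) (by omega)
    rw [show k+1-10 = k-9 by omega] at hx
    push_cast at hx
    have hy0 : (0:ℝ) ≤ (4/5:ℝ)^(k-9) := by positivity
    have hy1 : (4/5:ℝ)^(k-9) ≤ 1 := pow_le_one₀ (by norm_num) (by norm_num)
    have hx0 := xnn (k+1)
    push_cast at hx0
    have e : (4/5:ℝ)^(k+1-9) = (4/5:ℝ)^(k-9)*(4/5) := by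
      rw [show k+1-9 = (k-9)+1 by omega, pow_succ]
    rw [e]
    have hC9 := Cseq_pos 9
    have hCk := Cseq_pos k
    -- (1+y)*(1-x) ≥ 1 + (4/5)*y  where x ≤ y/10, y ≤ 1
    have hfac : (1 + (4/5:ℝ)^(k-9))*(1 - (((k:ℝ)+1)+1)*((Real.sqrt 5 - 1)/2)^(k+1))
        ≥ 1 + (4/5:ℝ)^(k-9)*(4/5) := by nlinarith
    have hmul := mul_le_mul_of_nonneg_right ih
      (by nlinarith : (0:ℝ) ≤ 1 - (((k:ℝ)+1)+1)*((Real.sqrt 5 - 1)/2)^(k+1))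
    nlinarith [hmul, mul_le_mul_of_nonneg_left hfac (by linarith : (0:ℝ) ≤ (1/2)*Cseq 9)]

lemma Cseq_lb (k : ℕ) : Cseq 9 / 2 ≤ Cseq k := by
  rcases Nat.lt_or_ge k 9 with h | h
  · have h1 : Cseq 9 ≤ Cseq k := Cseq_anti (by omega)
    have := Cseq_pos 9
    linarith
  · have h1 := Cseq_lower9 k h
    have hy0 : (0:ℝ) ≤ (4/5:ℝ)^(k-9) := by positivity
    have := Cseq_pos 9
    nlinarith

theorem coin_game_s_lower_lipschitz :
    ∃ C : ℝ, Filter.Tendsto Cseq Filter.atTop (nhds C) ∧ 0 < C ∧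
      ∀ p q : ℝ, 1 / 2 ≤ q → q < p → p < (Real.sqrt 5 - 1) / 2 →
        ∀ n : ℕ, 2 ≤ n → s p (n - 1) ≤ 0 →
          s q n + Cseq n * (p - q) < s p n ∧
          s q n + C * (p - q) < s q n + Cseq n * (p - q) := by
  have hbdd : BddBelow (Set.range Cseq) := by
    refine ⟨Cseq 9 / 2, ?_⟩
    rintro x ⟨k, rfl⟩
    exact Cseq_lb k
  refine ⟨⨅ k, Cseq k, tendsto_atTop_ciInf Cseq_anti hbdd, ?_, ?_⟩
  · have h1 : Cseq 9 / 2 ≤ ⨅ k, Cseq k := le_ciInf Cseq_lb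
    have h2 := Cseq_pos 9
    linarith
  · intro p q hq hqp hp n hn hsprev
    have hpq : (0:ℝ) < p - q := by linarith
    have hCC : (⨅ k, Cseq k) < Cseq n :=
      lt_of_le_of_lt (ciInf_le hbdd (n+1)) (Cseq_strict n hn)
    constructor
    · have hneg : ∀ k, 2 ≤ k → k + 1 ≤ n → s p k ≤ 0 := by
        intro k hk2 hk1
        have hn3 : 3 ≤ n := by omega
        have hchain := (master p (by linarith) hp.le (n-1) (by omega)).1
        have h := hchain k hk2 (by omega)
        have hrw : n - 1 + 1 = n := by omega
        calc s p k ≤ s p (n-1) := h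
        _ ≤ 0 := hsprev
      have hd := delta p q hq hqp hp.le n hn hneg
      have hPpos : (0:ℝ) < ∏ j ∈ Finset.Icc 3 n,
          (1 - ((j:ℝ)+1)*((Real.sqrt 5 - 1)/2)^j) := by
        refine Finset.prod_pos fun j hj => ?_
        have := xlt1 j (Finset.mem_Icc.mp hj).1
        linarith
      have hK : (5:ℝ)/6 < 2 - (p^2 + p*q + q^2) := by
        have hphi2 : ((Real.sqrt 5 - 1)/2)^2 = (3 - Real.sqrt 5)/2 := by
          linear_combination (1/4) * sqrt5_sq
        have hq0 : (0:ℝ) < q := by linarith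
        have hp0 : (0:ℝ) < p := by linarith
        have hqphi : q < (Real.sqrt 5 - 1)/2 := lt_trans hqp hp
        have h2 : p^2 < ((Real.sqrt 5 - 1)/2)^2 := by nlinarith
        have h3 : q^2 < ((Real.sqrt 5 - 1)/2)^2 := by nlinarith
        have h4 : p*q < ((Real.sqrt 5 - 1)/2)^2 := by nlinarith
        nlinarith [sqrt5_gt]
      have hstep : Cseq n * (p - q) < (2 - (p^2 + p*q + q^2)) *
          (∏ j ∈ Finset.Icc 3 n, (1 - ((j:ℝ)+1)*((Real.sqrt 5 - 1)/2)^j)) * (p-q) := by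
        rw [Cseq]
        have := mul_lt_mul_of_pos_right (mul_lt_mul_of_pos_right hK hPpos) hpq
        linarith
      linarith
    · have := mul_lt_mul_of_pos_right hCC hpq
      linarith
end

section
/- For every real p with 0 < p < 1/2, there exist infinitely many positive integers n such that v_n(p) < v_{n-1}(p) + 1. -/
/-!
If `v p n + 1 ≤ v p (n + 1)` for all `n ≥ N`, then `v p n - n` is nondecreasing from `N` on, so
after a throw of `n + 1` coins, setting aside `i ≤ n + 1 - N` heads is worth at most
`v p n + 1`. Only throws with more than `n + 1 - N` heads can do better, by at most `n`, while
the all-tails throw loses `1`. Hence `(1 - p) ^ (n + 1)` is at most `n` times the probability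
of more than `n + 1 - N` heads, which is `O(n ^ N p ^ n)`; for `p < 1 - p` this fails for large `n`.
-/

open Finset Filter Topology

theorem sum_Icc_choose_mul_pow_mul_pow {R : Type*} [CommRing R] (x y : R) (n : ℕ) :
    ∑ j ∈ Icc 1 n, ((n + 1).choose j : R) * x ^ j * y ^ (n + 1 - j) =
      (x + y) ^ (n + 1) - x ^ (n + 1) - y ^ (n + 1) := by
  rw [add_pow, sum_range_succ, sum_range_eq_add_Ico _ n.add_one_pos, Ico_add_one_right_eq_Icc]
  simp only [Nat.choose_self, Nat.choose_zero_right, Nat.sub_self, Nat.sub_zero, Nat.cast_one,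
    pow_zero, one_mul, mul_one]
  rw [sum_congr rfl fun j _ => mul_rotate ((n + 1).choose j : R) (x ^ j) (y ^ (n + 1 - j))]
  ring

theorem sum_Ioc_choose_mul_pow_mul_pow_le {p : ℝ} (hp0 : 0 ≤ p) (hp1 : p ≤ 1) (n K : ℕ) :
    ∑ j ∈ Ioc (n - K) n, (n.choose j : ℝ) * p ^ j * (1 - p) ^ (n - j) ≤
      K * n ^ K * p ^ (n - K) := by
  have hterm : ∀ j ∈ Ioc (n - K) n,
      (n.choose j : ℝ) * p ^ j * (1 - p) ^ (n - j) ≤ n ^ K * p ^ (n - K) := by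
    intro j hj
    obtain ⟨hKj, hjn⟩ := mem_Ioc.mp hj
    have hchoose : (n.choose j : ℝ) ≤ n ^ K := by
      rw [← Nat.choose_symm hjn]
      exact_mod_cast (n.choose_le_pow _).trans (Nat.pow_le_pow_right (by omega) (by omega))
    calc (n.choose j : ℝ) * p ^ j * (1 - p) ^ (n - j) ≤ n ^ K * p ^ (n - K) * 1 := by
          gcongr ?_ * ?_ * ?_
          · exact pow_le_pow_of_le_one hp0 hp1 hKj.le
          · exact pow_le_one₀ (by linarith) (by linarith)
      _ = n ^ K * p ^ (n - K) := mul_one _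
  calc _ ≤ (Ioc (n - K) n).card • ((n : ℝ) ^ K * p ^ (n - K)) := sum_le_card_nsmul _ _ _ hterm
    _ ≤ K * n ^ K * p ^ (n - K) := by
      rw [nsmul_eq_mul, mul_assoc, Nat.card_Ioc]
      gcongr
      exact_mod_cast (by omega : n - (n - K) ≤ K)

theorem eventually_mul_pow_mul_pow_lt {p q : ℝ} (hp : 0 ≤ p) (hpq : p < q) (c : ℝ) (k : ℕ) :
    ∀ᶠ n : ℕ in atTop, c * n ^ k * p ^ n < q ^ n := by
  have hq : 0 < q := hp.trans_lt hpq
  have hr : |p / q| < 1 := by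
    rw [abs_of_nonneg (div_nonneg hp hq.le)]
    exact (div_lt_one hq).mpr hpq
  have hlim := (tendsto_pow_const_mul_const_pow_of_abs_lt_one k hr).const_mul c
  rw [mul_zero] at hlim
  filter_upwards [hlim.eventually (gt_mem_nhds one_pos)] with n hn
  calc c * n ^ k * p ^ n = c * (n ^ k * (p / q) ^ n) * q ^ n := by
        rw [div_pow]; field_simp
    _ < 1 * q ^ n := by gcongr
    _ = q ^ n := one_mul _

section CoinGame

variable {p : ℝ}

theorem v_succ_le (hp0 : 0 ≤ p) (hp1 : p ≤ 1) {n : ℕ} (b : ℕ → ℝ)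
    (hb : ∀ j ∈ Icc 1 n, ∀ i ∈ Icc 1 j, v p (n + 1 - i) + i ≤ b j) :
    v p (n + 1) ≤ (n + 1) * p ^ (n + 1) + v p n * (1 - p) ^ (n + 1) +
      ∑ j ∈ Icc 1 n, ((n + 1).choose j : ℝ) * p ^ j * (1 - p) ^ (n + 1 - j) * b j := by
  have hq : 0 ≤ 1 - p := sub_nonneg.mpr hp1
  rw [v, ← sum_attach (Icc 1 n)]
  gcongr with j
  exact sup'_le _ _ fun i _ => hb j.1 j.2 i.1 i.2

theorem v_nonneg (hp0 : 0 ≤ p) (hp1 : p ≤ 1) (n : ℕ) : 0 ≤ v p n := by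
  induction n using Nat.strong_induction_on with
  | _ n ih =>
    cases n with
    | zero => rw [v]
    | succ n =>
      have hq : 0 ≤ 1 - p := sub_nonneg.mpr hp1
      rw [v]
      refine add_nonneg (by have := ih n n.lt_succ_self; positivity)
        (sum_nonneg fun j _ => mul_nonneg (by positivity) ?_)
      rw [le_sup'_iff]
      refine ⟨⟨1, mem_Icc.mpr ⟨le_rfl, (mem_Icc.mp j.2).1⟩⟩, mem_attach _ _, ?_⟩
      have := ih n n.lt_succ_self
      simp only [add_tsub_cancel_right, Nat.cast_one]
      positivity

theorem v_le (hp0 : 0 ≤ p) (hp1 : p ≤ 1) (n : ℕ) : v p n ≤ n := by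
  induction n using Nat.strong_induction_on with
  | _ n ih =>
    cases n with
    | zero => rw [v, Nat.cast_zero]
    | succ n =>
      have hstep := v_succ_le hp0 hp1 (n := n) (fun _ => (n : ℝ) + 1) fun j hj i hi => by
        obtain ⟨hi1, hij⟩ := mem_Icc.mp hi
        have hjn := (mem_Icc.mp hj).2
        have := ih (n + 1 - i) (by omega)
        rw [Nat.cast_sub (by omega)] at this
        push_cast at this
        linarith
      rw [← sum_mul, sum_Icc_choose_mul_pow_mul_pow, add_sub_cancel, one_pow] at hstep
      push_cast
      nlinarith [ih n n.lt_succ_self, pow_nonneg (sub_nonneg.mpr hp1) (n + 1)]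

theorem one_sub_pow_succ_le_of_forall_v_add_one_le (hp0 : 0 ≤ p) (hp1 : p ≤ 1) {N : ℕ}
    (hN : 1 ≤ N) (hv : ∀ n ≥ N, v p n + 1 ≤ v p (n + 1)) {n : ℕ} (hn : N ≤ n) :
    (1 - p) ^ (n + 1) ≤
      n * ∑ j ∈ Ioc (n + 1 - N) (n + 1),
        ((n + 1).choose j : ℝ) * p ^ j * (1 - p) ^ (n + 1 - j) := by
  have hmono : MonotoneOn (fun k => v p k - k) {k | N ≤ k} :=
    monotoneOn_nat_Ici_of_le_succ fun k hk => by push_cast; linarith [hv k hk]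
  have hbound : ∀ j ∈ Icc 1 n, ∀ i ∈ Icc 1 j,
      v p (n + 1 - i) + i ≤ v p n + 1 + if n + 1 - N < j then (n : ℝ) else 0 := by
    intro j hj i hi
    obtain ⟨hi1, hij⟩ := mem_Icc.mp hi
    have hjn := (mem_Icc.mp hj).2
    have hcast : ((n + 1 - i : ℕ) : ℝ) = n + 1 - i := by
      rw [Nat.cast_sub (by omega)]
      push_cast
      ring
    by_cases hiN : i ≤ n + 1 - N
    · have hle := hmono (show N ≤ n + 1 - i by omega) (show N ≤ n from hn)
        (show n + 1 - i ≤ n by omega)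
      have hite : (0 : ℝ) ≤ if n + 1 - N < j then (n : ℝ) else 0 := by
        split_ifs <;> positivity
      simp only [hcast] at hle
      linarith
    · rw [if_pos (by omega)]
      have hle := v_le hp0 hp1 (n + 1 - i)
      rw [hcast] at hle
      linarith [v_nonneg hp0 hp1 n]
  have hstep := v_succ_le hp0 hp1 _ hbound
  have htail : (Icc 1 n).filter (fun j => n + 1 - N < j) = Ioc (n + 1 - N) n := by
    ext j
    simp only [mem_filter, mem_Icc, mem_Ioc]
    omega
  rw [sum_congr rfl fun j _ => mul_add _ (v p n + 1) _, sum_add_distrib, ← sum_mul,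
    sum_Icc_choose_mul_pow_mul_pow, add_sub_cancel, one_pow] at hstep
  simp only [mul_ite, mul_zero] at hstep
  rw [← sum_filter, htail, ← sum_mul] at hstep
  rw [sum_Ioc_succ_top (by omega), Nat.choose_self, Nat.sub_self, pow_zero, Nat.cast_one,
    one_mul, mul_one, mul_add]
  nlinarith [hv n hn, mul_nonneg (v_nonneg hp0 hp1 n) (pow_nonneg hp0 (n + 1))]

theorem exists_ge_v_succ_lt_add_one (hp0 : 0 < p) (hp : p < 1 / 2) (N : ℕ) :
    ∃ n ≥ N, v p (n + 1) < v p n + 1 := by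
  by_contra! hv
  set M := N + 1
  have hq : p < 1 - p := by linarith
  obtain ⟨n, hn, hlt⟩ := ((eventually_ge_atTop M).and ((tendsto_add_atTop_nat 1).eventually
    (eventually_mul_pow_mul_pow_lt hp0.le hq (M / p ^ M) (M + 1)))).exists
  have hsplit : p ^ (n + 1) = p ^ (n + 1 - M) * p ^ M := by
    rw [← pow_add]
    congr 1
    omega
  have hpM : 0 < p ^ M := pow_pos hp0 M
  have hdecay := one_sub_pow_succ_le_of_forall_v_add_one_le hp0.le (by linarith)
    (by omega : 1 ≤ M) (fun k hk => hv k (by omega)) hn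
  have htail := sum_Ioc_choose_mul_pow_mul_pow_le hp0.le (by linarith) (n + 1) M
  push_cast at hlt htail
  refine lt_irrefl ((1 - p) ^ (n + 1)) ?_
  calc (1 - p) ^ (n + 1)
      ≤ n * ∑ j ∈ Ioc (n + 1 - M) (n + 1),
          ((n + 1).choose j : ℝ) * p ^ j * (1 - p) ^ (n + 1 - j) := hdecay
    _ ≤ n * (M * ((n : ℝ) + 1) ^ M * p ^ (n + 1 - M)) := by gcongr
    _ ≤ ((n : ℝ) + 1) * (M * ((n : ℝ) + 1) ^ M * p ^ (n + 1 - M)) := by gcongr; linarith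
    _ = M / p ^ M * ((n : ℝ) + 1) ^ (M + 1) * p ^ (n + 1) := by rw [hsplit]; field_simp; ring
    _ < (1 - p) ^ (n + 1) := hlt

end CoinGame

theorem coin_game_infinitely_many_decreases (p : ℝ) (hp1 : 0 < p) (hp2 : p < 1 / 2) :
    {n : ℕ | 1 ≤ n ∧ v p n < v p (n - 1) + 1}.Infinite := by
  refine Set.infinite_of_forall_exists_gt fun N => ?_
  obtain ⟨n, hn, hlt⟩ := exists_ge_v_succ_lt_add_one hp1 hp2 N
  exact ⟨n + 1, ⟨n.succ_pos, by simpa using hlt⟩, by omega⟩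
end

section
/- For every real p with 0 < p < 1, the sequence s_n(p) = v_n(p) − n + 1 − p converges as n → ∞ to a limit s(p) satisfying 1 − p − 1/p ≤ s(p) < 1 − p; equivalently, the sequence n − v_n(p) is convergent. -/
set_option linter.unusedSectionVars false

namespace CoinGame

lemma v_zero (p : ℝ) : v p 0 = 0 := by rw [v]


lemma sum_c (p : ℝ) (n : ℕ) :
    ∑ j ∈ Finset.Icc 1 n, (((n+1).choose j : ℕ) : ℝ) * p^j * (1-p)^(n+1-j)
      = 1 - (1-p)^(n+1) - p^(n+1) := by
  have h := add_pow p (1-p) (n+1)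
  have hins : Finset.range (n+2) = insert 0 (insert (n+1) (Finset.Icc 1 n)) := by
    ext x; simp [Finset.mem_Icc, Finset.mem_range]; omega
  rw [hins, Finset.sum_insert (by simp), Finset.sum_insert (by simp [Finset.mem_Icc])] at h
  have h2 : p + (1-p) = 1 := by ring
  rw [h2, one_pow] at h
  simp only [pow_zero, Nat.choose_zero_right, Nat.choose_self, Nat.sub_zero, Nat.sub_self,
    Nat.cast_one, one_mul, mul_one] at h
  have h3 : ∑ j ∈ Finset.Icc 1 n, (((n+1).choose j : ℕ) : ℝ) * p^j * (1-p)^(n+1-j)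
      = ∑ j ∈ Finset.Icc 1 n, p^j * (1-p)^(n+1-j) * (((n+1).choose j : ℕ) : ℝ) := by
    apply Finset.sum_congr rfl; intro j _; ring
  rw [h3]
  linarith

lemma v_succ_le (p : ℝ) (hp : 0 ≤ p) (hq : 0 ≤ 1 - p) (n : ℕ) (b : ℝ)
    (hb : ∀ i : ℕ, 1 ≤ i → i ≤ n → v p (n + 1 - i) + (i : ℝ) ≤ b) :
    v p (n+1) ≤ ((n : ℝ) + 1) * p ^ (n + 1) + v p n * (1 - p) ^ (n + 1)
      + (1 - (1-p)^(n+1) - p^(n+1)) * b := by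
  rw [v]
  have key : ∑ j ∈ (Finset.Icc 1 n).attach,
      (((n + 1).choose j.1 : ℕ) : ℝ) * p ^ (j.1 : ℕ) * (1 - p) ^ (n + 1 - j.1) *
        ((Finset.Icc 1 j.1).attach.sup'
          (Finset.attach_nonempty_iff.mpr
            (Finset.nonempty_Icc.mpr (Finset.mem_Icc.mp j.2).1))
          (fun i => v p (n + 1 - i.1) + (i.1 : ℝ)))
      ≤ ∑ j ∈ (Finset.Icc 1 n).attach,
      (((n + 1).choose j.1 : ℕ) : ℝ) * p ^ (j.1 : ℕ) * (1 - p) ^ (n + 1 - j.1) * b := by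
    apply Finset.sum_le_sum
    intro j _
    apply mul_le_mul_of_nonneg_left _ (by positivity)
    apply Finset.sup'_le
    intro i _
    have hi := Finset.mem_Icc.mp i.2
    have hj := Finset.mem_Icc.mp j.2
    exact hb i.1 hi.1 (le_trans hi.2 hj.2)
  have hconv : ∑ j ∈ (Finset.Icc 1 n).attach,
      (((n + 1).choose j.1 : ℕ) : ℝ) * p ^ (j.1 : ℕ) * (1 - p) ^ (n + 1 - j.1) * b
      = (1 - (1-p)^(n+1) - p^(n+1)) * b := by
    rw [Finset.sum_attach (Finset.Icc 1 n)
      (fun j => (((n + 1).choose j : ℕ) : ℝ) * p ^ j * (1 - p) ^ (n + 1 - j) * b),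
      ← Finset.sum_mul, sum_c]
  linarith

lemma le_v_succ (p : ℝ) (hp : 0 ≤ p) (hq : 0 ≤ 1 - p) (n : ℕ) (b : ℝ)
    (hb : b ≤ v p n + 1) :
    ((n : ℝ) + 1) * p ^ (n + 1) + v p n * (1 - p) ^ (n + 1)
      + (1 - (1-p)^(n+1) - p^(n+1)) * b ≤ v p (n+1) := by
  rw [v]
  have key : ∑ j ∈ (Finset.Icc 1 n).attach,
      (((n + 1).choose j.1 : ℕ) : ℝ) * p ^ (j.1 : ℕ) * (1 - p) ^ (n + 1 - j.1) * b
      ≤ ∑ j ∈ (Finset.Icc 1 n).attach,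
      (((n + 1).choose j.1 : ℕ) : ℝ) * p ^ (j.1 : ℕ) * (1 - p) ^ (n + 1 - j.1) *
        ((Finset.Icc 1 j.1).attach.sup'
          (Finset.attach_nonempty_iff.mpr
            (Finset.nonempty_Icc.mpr (Finset.mem_Icc.mp j.2).1))
          (fun i => v p (n + 1 - i.1) + (i.1 : ℝ))) := by
    apply Finset.sum_le_sum
    intro j _
    apply mul_le_mul_of_nonneg_left _ (by positivity)
    have hj := Finset.mem_Icc.mp j.2
    have h1 : (1 : ℕ) ∈ Finset.Icc 1 j.1 := Finset.mem_Icc.mpr ⟨le_refl 1, hj.1⟩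
    calc b ≤ v p n + 1 := hb
    _ = v p (n + 1 - (1:ℕ)) + ((1:ℕ) : ℝ) := by norm_num
    _ ≤ _ := Finset.le_sup' (fun i => v p (n + 1 - i.1) + (i.1 : ℝ)) (Finset.mem_attach _ ⟨1, h1⟩)
  have hconv : ∑ j ∈ (Finset.Icc 1 n).attach,
      (((n + 1).choose j.1 : ℕ) : ℝ) * p ^ (j.1 : ℕ) * (1 - p) ^ (n + 1 - j.1) * b
      = (1 - (1-p)^(n+1) - p^(n+1)) * b := by
    rw [Finset.sum_attach (Finset.Icc 1 n)
      (fun j => (((n + 1).choose j : ℕ) : ℝ) * p ^ j * (1 - p) ^ (n + 1 - j) * b),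
      ← Finset.sum_mul, sum_c]
  linarith

noncomputable def w (p : ℝ) (n : ℕ) : ℝ := (n : ℝ) - v p n

section
variable {p : ℝ} (hp : 0 < p) (hq : 0 < 1 - p)
include hp hq

lemma pow_sum_le (n : ℕ) : (1-p)^(n+1) + p^(n+1) ≤ 1 := by
  have h1 : p^(n+1) ≤ p := pow_le_of_le_one hp.le (by linarith) (by omega)
  have h2 : (1-p)^(n+1) ≤ 1-p := pow_le_of_le_one hq.le (by linarith) (by omega)
  linarith

lemma v_le_n : ∀ n : ℕ, v p n ≤ (n : ℝ) := by
  intro n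
  induction n using Nat.strong_induction_on with
  | _ n ih =>
    match n with
    | 0 => simp [v_zero]
    | Nat.succ n =>
      have h := v_succ_le p hp.le hq.le n ((n : ℝ) + 1) ?_
      · have hvn : v p n ≤ (n : ℝ) := ih n (by omega)
        have hps := pow_sum_le hp hq n
        have h1 : (0:ℝ) ≤ (1-p)^(n+1) := by positivity
        have h2 : (0:ℝ) ≤ p^(n+1) := by positivity
        push_cast
        nlinarith
      · intro i hi1 hin
        have hv := ih (n + 1 - i) (by omega)
        have hcast : ((n + 1 - i : ℕ) : ℝ) = (n : ℝ) + 1 - (i : ℝ) := by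
          have : (i : ℝ) ≤ (n : ℝ) + 1 := by exact_mod_cast by omega
          push_cast [Nat.cast_sub (by omega : i ≤ n + 1)]; ring
        rw [hcast] at hv
        linarith

lemma w_nonneg (n : ℕ) : 0 ≤ w p n := by
  have := v_le_n hp hq n; simp [w]; linarith

lemma w_zero : w p 0 = 0 := by simp [w, v_zero]

-- upper bound: w (n+1) ≤ w n + q^(n+1)
lemma w_succ_le (n : ℕ) : w p (n+1) ≤ w p n + (1-p)^(n+1) := by
  have h := le_v_succ p hp.le hq.le n (v p n + 1) le_rfl
  have hw := w_nonneg hp hq n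
  have h2 : (0:ℝ) ≤ p^(n+1) := by positivity
  simp only [w] at *
  push_cast
  nlinarith

-- lower bound
lemma le_w_succ (n : ℕ) (b : ℝ) (hb : ∀ k : ℕ, 1 ≤ k → k ≤ n → b ≤ w p k) :
    (1-p)^(n+1) * (1 + w p n) + (1 - (1-p)^(n+1) - p^(n+1)) * b ≤ w p (n+1) := by
  have h := v_succ_le p hp.le hq.le n ((n : ℝ) + 1 - b) ?_
  · simp only [w] at *
    push_cast
    nlinarith
  · intro i hi1 hin
    have hwk := hb (n + 1 - i) (by omega) (by omega)
    have hcast : ((n + 1 - i : ℕ) : ℝ) = (n : ℝ) + 1 - (i : ℝ) := by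
      push_cast [Nat.cast_sub (by omega : i ≤ n + 1)]; ring
    simp only [w, hcast] at hwk
    linarith

lemma w_ge_pow : ∀ n : ℕ, 1 ≤ n → (1-p)^n ≤ w p n := by
  intro n hn
  match n, hn with
  | Nat.succ n, _ =>
    show (1-p)^(n+1) ≤ w p (n+1)
    have h := le_w_succ hp hq n 0 (fun k _ _ => w_nonneg hp hq k)
    have hw := w_nonneg hp hq n
    have hps := pow_sum_le hp hq n
    have h1 : (0:ℝ) ≤ (1-p)^(n+1) := by positivity
    nlinarith


lemma exists_pos_lb : ∃ c : ℝ, 0 < c ∧ ∃ N : ℕ, ∀ n : ℕ, N ≤ n → c ≤ w p n := by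
  -- choose N
  obtain ⟨N0, hN0⟩ := exists_pow_lt_of_lt_one (show (0:ℝ) < (1-p)/2 by linarith)
    (show p < 1 by linarith)
  set N := max N0 1 with hN
  have hN1 : 1 ≤ N := le_max_right _ _
  have hpN : p ^ (N + 1) ≤ (1-p)/2 := by
    have hNN : N0 ≤ N := le_max_left _ _
    calc p ^ (N+1) ≤ p ^ N0 :=
        pow_le_pow_of_le_one hp.le (by linarith) (by omega)
    _ ≤ (1-p)/2 := hN0.le
  have hne : (Finset.Icc 1 N).Nonempty := Finset.nonempty_Icc.mpr hN1
  set m := (Finset.Icc 1 N).inf' hne (w p) with hm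
  have hmpos : 0 < m := by
    rw [hm, Finset.lt_inf'_iff]
    intro k hk
    have hk1 := (Finset.mem_Icc.mp hk).1
    calc (0:ℝ) < (1-p)^k := by positivity
    _ ≤ w p k := w_ge_pow hp hq k hk1
  have hmle : ∀ k : ℕ, 1 ≤ k → k ≤ N → m ≤ w p k := fun k h1 h2 =>
    Finset.inf'_le _ (Finset.mem_Icc.mpr ⟨h1, h2⟩)
  have hm1 : m ≤ 1 := by
    have h1 := hmle 1 le_rfl hN1
    have h2 := w_succ_le hp hq 0
    have h3 := w_zero hp hq
    have : (1-p)^(0+1) = 1 - p := by ring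
    linarith
  -- tail bound helper
  have htail : ∀ n : ℕ, N ≤ n → p ^ (n+1) / (1-p) ≤ 1/2 := by
    intro n hn
    rw [div_le_iff₀ hq]
    calc p ^ (n+1) ≤ p ^ (N+1) := pow_le_pow_of_le_one hp.le (by linarith) (by omega)
    _ ≤ (1-p)/2 := hpN
    _ = 1/2 * (1-p) := by ring
  set B : ℕ → ℝ := fun n => m * (1/2 + p^(n+1)/(1-p)) with hB
  have hBstep : ∀ n : ℕ, B (n+1) = B n - m * p^(n+1) := by
    intro n
    rw [hB]
    have : (1:ℝ) - p ≠ 0 := by linarith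
    field_simp
    ring
  have claim : ∀ n : ℕ, N ≤ n → ∀ k : ℕ, 1 ≤ k → k ≤ n → B n ≤ w p k := by
    intro n hn
    induction n, hn using Nat.le_induction with
    | base =>
      intro k h1 h2
      have := htail N le_rfl
      have h3 := hmle k h1 h2
      have : B N ≤ m := by
        rw [hB]; nlinarith
      linarith
    | succ n hn ih =>
      have hBle : B (n+1) ≤ B n := by
        rw [hBstep]
        have : (0:ℝ) ≤ p ^ (n+1) := by positivity
        nlinarith
      intro k h1 h2
      rcases Nat.lt_or_ge k (n+1) with hk | hk
      · exact le_trans hBle (ih k h1 (by omega))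
      · have hkeq : k = n + 1 := by omega
        subst hkeq
        have h := le_w_succ hp hq n (B n) ih
        have hBn : B n ≤ m := by
          have := htail n hn; rw [hB]; nlinarith
        have hwn : 0 ≤ w p n := w_nonneg hp hq n
        have e1 : (0:ℝ) ≤ (1-p)^(n+1) * (1 + w p n - B n) := by
          apply mul_nonneg (by positivity); nlinarith
        have e2 : (0:ℝ) ≤ p^(n+1) * (m - B n) := by
          apply mul_nonneg (by positivity); linarith
        have hstep := hBstep n
        nlinarith
  refine ⟨m/2, by linarith, N, fun n hn => ?_⟩
  have h1 := claim n hn n (hN1.trans hn) le_rfl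
  have h2 : m/2 ≤ B n := by
    rw [hB]
    have : (0:ℝ) ≤ p^(n+1)/(1-p) := by positivity
    nlinarith
  linarith

lemma w_tendsto : ∃ W : ℝ, Filter.Tendsto (w p) Filter.atTop (nhds W) ∧
    0 < W ∧ W ≤ (1-p)/p := by
  set u : ℕ → ℝ := fun n => w p n + (1-p)^(n+1)/p with hu
  have hanti : Antitone u := by
    apply antitone_nat_of_succ_le
    intro n
    have h1 := w_succ_le hp hq n
    have h2 : (1-p)^(n+1)/p - (1-p)^(n+2)/p = (1-p)^(n+1) := by
      field_simp
      ring
    simp only [hu]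
    linarith
  have hbdd : BddBelow (Set.range u) := by
    refine ⟨0, fun x hx => ?_⟩
    obtain ⟨n, rfl⟩ := hx
    have := w_nonneg hp hq n
    have : (0:ℝ) ≤ (1-p)^(n+1)/p := by positivity
    simp only [hu]
    linarith [w_nonneg hp hq n]
  have huconv := tendsto_atTop_ciInf hanti hbdd
  set W := ⨅ n, u n with hW
  have hzero : Filter.Tendsto (fun n : ℕ => (1-p)^(n+1)/p) Filter.atTop (nhds 0) := by
    have h0 := (tendsto_pow_atTop_nhds_zero_of_lt_one hq.le (by linarith : 1 - p < 1)).mul_const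
      ((1-p)/p)
    rw [zero_mul] at h0
    apply h0.congr
    intro n
    rw [pow_succ]
    field_simp
  have hwconv : Filter.Tendsto (w p) Filter.atTop (nhds W) := by
    have := huconv.sub hzero
    rw [sub_zero] at this
    apply this.congr
    intro n
    simp only [hu]
    ring
  obtain ⟨c, hc, N, hcl⟩ := exists_pos_lb hp hq
  have hWlb : c ≤ W := ge_of_tendsto hwconv (Filter.eventually_atTop.mpr ⟨N, hcl⟩)
  have hWub : W ≤ (1-p)/p := by
    have h0 : u 0 = (1-p)/p := by
      simp only [hu]
      rw [w_zero hp hq]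
      norm_num
    calc W ≤ u 0 := ciInf_le hbdd 0
    _ = (1-p)/p := h0
  exact ⟨W, hwconv, lt_of_lt_of_le hc hWlb, hWub⟩


end
end CoinGame

theorem coin_game_s_converges (p : ℝ) (hp1 : 0 < p) (hp2 : p < 1) :
    ∃ L : ℝ, Filter.Tendsto (fun n : ℕ => s p n) Filter.atTop (nhds L) ∧
      1 - p - 1 / p ≤ L ∧ L < 1 - p ∧
      Filter.Tendsto (fun n : ℕ => (n : ℝ) - v p n) Filter.atTop (nhds (1 - p - L)) := by
  have hq : 0 < 1 - p := by linarith
  obtain ⟨W, hwconv, hWpos, hWub⟩ := CoinGame.w_tendsto hp1 hq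
  refine ⟨1 - p - W, ?_, ?_, ?_, ?_⟩
  · have h := (tendsto_const_nhds (x := (1:ℝ)-p) (f := Filter.atTop (α := ℕ))).sub hwconv
    apply h.congr
    intro n
    simp only [s, CoinGame.w]
    ring
  · have h : (1-p)/p ≤ 1/p := by gcongr; linarith
    linarith
  · linarith
  · have h : (1:ℝ) - p - (1 - p - W) = W := by ring
    rw [h]
    exact hwconv
end

section
/- Let φ = (√5 − 1)/2. For every real p with φ ≤ p < 1 and every natural number n, one has the closed-form expression v_n(p) = n − Σ_{k=1}^{n} [(1−p)^k · Π_{j=k+1}^{n} (1 − p^j)]. -/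
/-! Write `v p n = n - shortfall p n`, where `shortfall p n` is the sum in the statement; it
satisfies `shortfall p (n + 1) = shortfall p n * (1 - p ^ (n + 1)) + (1 - p) ^ (n + 1)`.
For `p ≥ (√5 - 1) / 2` the shortfall is antitone from `n = 1` on, so in the recursion for `v` the
maximum is attained by setting aside a single head, and by the binomial theorem the recursion
collapses to the recurrence of the shortfall. -/

open Finset

theorem sum_Icc_choose_mul_pow {R : Type*} [CommRing R] (x y : R) (m : ℕ) :
    ∑ j ∈ Icc 1 m, ((m + 1).choose j : R) * x ^ j * y ^ (m + 1 - j)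
      = (x + y) ^ (m + 1) - x ^ (m + 1) - y ^ (m + 1) := by
  rw [add_pow, range_eq_Ico, sum_Ico_succ_top (by omega), sum_eq_sum_Ico_succ_bot (by omega),
    Ico_add_one_right_eq_Icc]
  simp only [Nat.choose_self, Nat.choose_zero_right, Nat.sub_self, Nat.sub_zero, Nat.cast_one,
    pow_zero, one_mul, zero_add, mul_comm, mul_left_comm, mul_assoc]
  abel

namespace CoinGame

noncomputable def shortfall (p : ℝ) (n : ℕ) : ℝ :=
  ∑ k ∈ Icc 1 n, (1 - p) ^ k * ∏ j ∈ Icc (k + 1) n, (1 - p ^ j)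

@[simp]
theorem shortfall_zero (p : ℝ) : shortfall p 0 = 0 := by
  simp [shortfall]

theorem shortfall_succ (p : ℝ) (n : ℕ) :
    shortfall p (n + 1) = shortfall p n * (1 - p ^ (n + 1)) + (1 - p) ^ (n + 1) := by
  have hprod : ∀ k ∈ Icc 1 n, (1 - p) ^ k * ∏ j ∈ Icc (k + 1) (n + 1), (1 - p ^ j)
      = (1 - p) ^ k * (∏ j ∈ Icc (k + 1) n, (1 - p ^ j)) * (1 - p ^ (n + 1)) := by
    intro k hk
    rw [prod_Icc_succ_top (by grind), mul_assoc]
  rw [shortfall, sum_Icc_succ_top (by omega), sum_congr rfl hprod, ← sum_mul, shortfall,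
    Icc_eq_empty_of_lt (Nat.lt_succ_self _), prod_empty, mul_one]

theorem shortfall_one (p : ℝ) : shortfall p 1 = 1 - p := by
  simp [shortfall_succ]

/-- The base case `n = 1` is the one place where `1 - p ≤ p ^ 2`, i.e. `p ≥ (√5 - 1) / 2`,
is needed. -/
theorem one_sub_pow_succ_le_pow_succ_mul_shortfall {p : ℝ} (hp0 : 0 ≤ p) (hp1 : p ≤ 1)
    (hsq : 1 - p ≤ p ^ 2) {n : ℕ} (hn : 1 ≤ n) :
    (1 - p) ^ (n + 1) ≤ p ^ (n + 1) * shortfall p n := by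
  induction n, hn using Nat.le_induction with
  | base =>
    rw [shortfall_one]
    linear_combination mul_le_mul_of_nonneg_right hsq (sub_nonneg.2 hp1)
  | succ n _ ih =>
    have hhalf : 1 - p ≤ p := by nlinarith
    have hpow : 0 ≤ 1 - p ^ (n + 1) := sub_nonneg.2 (pow_le_one₀ hp0 hp1)
    calc (1 - p) ^ (n + 1 + 1) = (1 - p) * (1 - p) ^ (n + 1) := pow_succ' _ _
      _ ≤ p * (1 - p) ^ (n + 1) := by gcongr
      _ = p * (1 - p ^ (n + 1)) * (1 - p) ^ (n + 1) + p * p ^ (n + 1) * (1 - p) ^ (n + 1) := by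
        ring
      _ ≤ p * (1 - p ^ (n + 1)) * (p ^ (n + 1) * shortfall p n)
          + p * p ^ (n + 1) * (1 - p) ^ (n + 1) := by gcongr
      _ = p ^ (n + 1 + 1) * shortfall p (n + 1) := by rw [shortfall_succ]; ring

theorem shortfall_antitoneOn {p : ℝ} (hp0 : 0 ≤ p) (hp1 : p ≤ 1) (hsq : 1 - p ≤ p ^ 2) :
    AntitoneOn (shortfall p) {n | 1 ≤ n} := by
  refine antitoneOn_nat_Ici_of_succ_le fun n hn => ?_
  have := one_sub_pow_succ_le_pow_succ_mul_shortfall hp0 hp1 hsq hn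
  rw [shortfall_succ]
  linarith

/-- Of the `j` heads showing, setting aside a single one is optimal. -/
theorem sup'_payoff_eq {p : ℝ} (hp0 : 0 ≤ p) (hp1 : p ≤ 1) (hsq : 1 - p ≤ p ^ 2) {n j : ℕ}
    (hv : ∀ m ≤ n, v p m = m - shortfall p m) (hj : j ≤ n) (H : (Icc 1 j).attach.Nonempty) :
    (Icc 1 j).attach.sup' H (fun i => v p (n + 1 - i.1) + (i.1 : ℝ)) = v p n + 1 := by
  have hj1 : 1 ≤ j := nonempty_Icc.1 (attach_nonempty_iff.1 H)
  refine le_antisymm (sup'_le _ _ fun i _ => ?_)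
    (le_sup'_of_le _ (mem_attach _ ⟨1, mem_Icc.2 ⟨le_rfl, hj1⟩⟩) (by simp))
  obtain ⟨hi1, hij⟩ := mem_Icc.1 i.2
  have hanti := shortfall_antitoneOn hp0 hp1 hsq (show 1 ≤ n + 1 - i.1 by omega)
    (show 1 ≤ n by omega) (show n + 1 - i.1 ≤ n by omega)
  rw [hv _ (by omega), hv n le_rfl, Nat.cast_sub (by omega)]
  push_cast
  linarith

theorem v_eq_sub_shortfall {p : ℝ} (hp0 : 0 ≤ p) (hp1 : p ≤ 1) (hsq : 1 - p ≤ p ^ 2) (n : ℕ) :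
    v p n = n - shortfall p n := by
  induction n using Nat.strong_induction_on with
  | _ n ih =>
    cases n with
    | zero => simp [v]
    | succ n =>
      have hv : ∀ m ≤ n, v p m = m - shortfall p m := fun m hm => ih m (by omega)
      rw [v, sum_congr rfl fun j _ => by
          rw [sup'_payoff_eq hp0 hp1 hsq hv (mem_Icc.1 j.2).2],
        sum_attach (Icc 1 n) fun j => ((n + 1).choose j : ℝ) * p ^ j * (1 - p) ^ (n + 1 - j) *
          (v p n + 1),
        ← sum_mul, sum_Icc_choose_mul_pow, hv n le_rfl, shortfall_succ]
      push_cast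
      ring

end CoinGame

theorem coin_game_closed_form (p : ℝ) (hp1 : (Real.sqrt 5 - 1) / 2 ≤ p) (hp2 : p < 1)
    (n : ℕ) :
    v p n = (n : ℝ) -
      ∑ k ∈ Finset.Icc 1 n, (1 - p) ^ k * ∏ j ∈ Finset.Icc (k + 1) n, (1 - p ^ j) := by
  have hsqrt5 : (2 : ℝ) ≤ Real.sqrt 5 := Real.le_sqrt_of_sq_le (by norm_num)
  have hp0 : 0 ≤ p := by linarith
  have hsq : 1 - p ≤ p ^ 2 := by
    nlinarith [Real.sq_sqrt (show (0 : ℝ) ≤ 5 by norm_num)]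
  exact CoinGame.v_eq_sub_shortfall hp0 hp2.le hsq n
end
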